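/- If the inequality a·x ≥ α is valid for the graphical traveling salesman polyhedron P and the face F = {x ∈ P : a·x = α} it defines is nonempty and good, then a is metric. -/

import Mathlib

/-
Shortcutting: if a connected Eulerian multigraph `y` uses the edge `vw`, replacing one copy of
`vw` by the path `v - u - w` gives another connected Eulerian multigraph, whose cost exceeds that
of `y` by exactly `t_{u,vw}(a)`. A point of the face with `x_vw > 0` is a convex combination of
Eulerian vectors, all on the face, one of which uses `vw`; validity at its shortcut then forces
`t_{u,vw}(a) ≥ 0`.
-/

open scoped BigOperators

abbrev Edge (n : ℕ) := {e : Sym2 (Fin n) // ¬ e.IsDiag}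

namespace TSP
variable {n : ℕ}
noncomputable section

def dot (a x : Edge n → ℝ) : ℝ := ∑ e, a e * x e
def ev (a : Edge n → ℝ) (u v : Fin n) : ℝ :=
  if h : u = v then 0 else a ⟨s(u, v), fun hd => h (Sym2.mk_isDiag_iff.mp hd)⟩
def indic (u v : Fin n) : Edge n → ℝ := fun e => if e.val = s(u, v) then 1 else 0
def delta (u : Fin n) : Edge n → ℝ := fun e => if u ∈ e.val then 1/2 else 0
def RootedTri (u v w : Fin n) : Prop := v ≠ w ∧ u ≠ v ∧ u ≠ w
def tri (a : Edge n → ℝ) (u v w : Fin n) : ℝ := ev a v u + ev a u w - ev a v w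
def IsMetric (a : Edge n → ℝ) : Prop := ∀ u v w, RootedTri u v w → 0 ≤ tri a u v w
def IsTT (a : Edge n → ℝ) : Prop :=
  IsMetric a ∧ ∀ u, ∃ v w, RootedTri u v w ∧ tri a u v w = 0
def lam (a : Edge n → ℝ) (u : Fin n) : ℝ :=
  sInf {r | ∃ v w, RootedTri u v w ∧ r = tri a u v w}
def theta (a : Edge n → ℝ) : Edge n → ℝ := fun e => a e - ∑ u, lam a u * delta u e
def zvec (n : ℕ) : Edge n → ℝ := fun _ => 2 / ((n : ℝ) - 1)
def gamma (a : Edge n → ℝ) : ℝ := -1 + dot a (zvec n) - ∑ u, lam a u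
def nextF (i : Fin n) : Fin n := ⟨(i.val + 1) % n, Nat.mod_lt _ i.pos⟩
def hamVec (σ : Equiv.Perm (Fin n)) : Edge n → ℝ :=
  fun e => if ∃ i : Fin n, e.val = s(σ i, σ (nextF i)) then 1 else 0
def stsp (n : ℕ) : Set (Edge n → ℝ) :=
  convexHull ℝ {x | ∃ σ : Equiv.Perm (Fin n), x = hamVec σ}
def degree (x : Edge n → ℝ) (u : Fin n) : ℝ := ∑ e, if u ∈ e.val then x e else 0
lemma ev_symm (a : Edge n → ℝ) (u v : Fin n) : ev a u v = ev a v u := by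
  unfold ev
  rcases eq_or_ne u v with h | h
  · subst h; simp
  · rw [dif_neg h, dif_neg (Ne.symm h)]
    congr 1
    exact Subtype.ext (Sym2.eq_swap)
def supportGraph (x : Edge n → ℝ) : SimpleGraph (Fin n) where
  Adj u v := u ≠ v ∧ 0 < ev x u v
  symm := ⟨fun u v h => ⟨h.1.symm, by rw [ev_symm]; exact h.2⟩⟩
  loopless := ⟨fun u h => h.1 rfl⟩
def IsEulerian (x : Edge n → ℝ) : Prop :=
  (∀ e, ∃ m : ℕ, x e = m) ∧ (supportGraph x).Connected ∧
    ∀ u, ∃ m : ℕ, 0 < m ∧ degree x u = 2 * m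
def gtsp (n : ℕ) : Set (Edge n → ℝ) := convexHull ℝ {x | IsEulerian x}
def IsFaceOf (Q F : Set (Edge n → ℝ)) : Prop :=
  ∃ a α, (∀ x ∈ Q, α ≤ dot a x) ∧ F = {x ∈ Q | dot a x = α}
def IsGood (F : Set (Edge n → ℝ)) : Prop := ∀ e : Edge n, ∃ x ∈ F, 0 < x e
def adim (X : Set (Edge n → ℝ)) : ℕ := Module.finrank ℝ (affineSpan ℝ X).direction
def direc (F : Set (Edge n → ℝ)) : Submodule ℝ (Edge n → ℝ) :=
  Submodule.span ℝ {d | ∃ x ∈ F, ∃ y ∈ F, d = y - x}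
def shortcut (u v w : Fin n) : Edge n → ℝ :=
  fun e => indic v w e - indic v u e - indic u w e
def gtspPolar (n : ℕ) : Set (Edge n → ℝ) := {b | ∀ x ∈ gtsp n, 1 ≤ dot b x}

/-- The face of `S` defined by `a ∈ D_S`. -/
def faceS (a : Edge n → ℝ) : Set (Edge n → ℝ) :=
  {x ∈ stsp n | dot a x = dot a (zvec n) - 1}

/-- `D_S`: the points `a ∈ L` whose inequality `a·x ≥ a·z − 1` is valid for `S`
and defines a nonempty good face of `S`. -/
def DS (n : ℕ) : Set (Edge n → ℝ) :=
  {a | (∀ u, dot (delta u) a = 0) ∧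
       (∀ x ∈ stsp n, dot a (zvec n) - 1 ≤ dot a x) ∧
       (faceS a).Nonempty ∧ IsGood (faceS a)}

/-- `D_P`: TT points of `P^△` defining nonempty good faces of `P`. -/
def DP (n : ℕ) : Set (Edge n → ℝ) :=
  {b | b ∈ gtspPolar n ∧ IsTT b ∧
       ({x ∈ gtsp n | dot b x = 1}).Nonempty ∧ IsGood {x ∈ gtsp n | dot b x = 1}}

/-- `𝔉(a)`: faces of `P` definable by rotated versions of `a·x ≥ a·z − 1`. -/
def Frot (a : Edge n → ℝ) : Set (Set (Edge n → ℝ)) :=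
  {F | ∃ ξ : Fin n → ℝ,
    (∀ x ∈ gtsp n,
      dot a (zvec n) - 1 + dot (∑ u, ξ u • delta u) (zvec n)
        ≤ dot (a + ∑ u, ξ u • delta u) x) ∧
    F = {x ∈ gtsp n |
      dot (a + ∑ u, ξ u • delta u) x
        = dot a (zvec n) - 1 + dot (∑ u, ξ u • delta u) (zvec n)}}

/-- `E^u(a)`: the edges achieving the minimal triangle slack rooted at `u`. -/
def Eu (a : Edge n → ℝ) (u : Fin n) : Set (Edge n) :=
  {e | ∃ v w, RootedTri u v w ∧ e.val = s(v, w) ∧ tri a u v w = lam a u}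

def IsFacetP (n : ℕ) (G : Set (Edge n → ℝ)) : Prop :=
  IsFaceOf (gtsp n) G ∧ adim G = n * (n - 1) / 2 - 1
def IsFacetS (n : ℕ) (F : Set (Edge n → ℝ)) : Prop :=
  IsFaceOf (stsp n) F ∧ adim F + 1 = adim (stsp n)
def IsNRFacet (n : ℕ) (G : Set (Edge n → ℝ)) : Prop :=
  IsFacetP n G ∧ IsFacetS n (G ∩ stsp n)
def IsDegreeFacet (n : ℕ) (G : Set (Edge n → ℝ)) : Prop :=
  ∃ u, G = {x ∈ gtsp n | dot (delta u) x = 1}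
def IsNonNegFacet (n : ℕ) (G : Set (Edge n → ℝ)) : Prop :=
  ∃ e : Edge n, G = {x ∈ gtsp n | x e = 0}
def IsNonNRFacet (n : ℕ) (G : Set (Edge n → ℝ)) : Prop :=
  IsFacetP n G ∧ IsGood G ∧ ¬ IsDegreeFacet n G ∧
    adim (G ∩ stsp n) + 1 < adim (stsp n)

/-- Solution set of the relaxation `R_B` (degree inequalities). -/
def RBge {k : ℕ} (n : ℕ) (b : Fin k → Edge n → ℝ) : Set (Edge n → ℝ) :=
  {x | (∀ j, 1 ≤ dot (b j) x) ∧ (∀ v, 1 ≤ dot (delta v) x) ∧ ∀ e, 0 ≤ x e}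

/-- Solution set of `R_B` with degree equations. -/
def RBeq {k : ℕ} (n : ℕ) (b : Fin k → Edge n → ℝ) : Set (Edge n → ℝ) :=
  {x | (∀ j, 1 ≤ dot (b j) x) ∧ (∀ v, dot (delta v) x = 1) ∧ ∀ e, 0 ≤ x e}

/-- The parsimonious property of the relaxation `R_B`. -/
def Parsimonious {k : ℕ} (n : ℕ) (b : Fin k → Edge n → ℝ) : Prop :=
  ∀ c : Edge n → ℝ, IsMetric c →
    sInf (dot c '' RBge n b) = sInf (dot c '' RBeq n b)

/-- Adjacency in the ridge graph of `P`. -/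
def RidgeAdj (n : ℕ) (F G : Set (Edge n → ℝ)) : Prop :=
  IsFacetP n F ∧ IsFacetP n G ∧ F ≠ G ∧ adim (F ∩ G) = n * (n - 1) / 2 - 2

/-- `q_I = Σ_{u ∉ I} δ_u`. -/
def qI (n : ℕ) (I : Finset (Fin n)) : Edge n → ℝ := ∑ u ∈ Iᶜ, delta u

/-- The face `G_I` of `P`. -/
def GI (n : ℕ) (a : Edge n → ℝ) (I : Finset (Fin n)) : Set (Edge n → ℝ) :=
  {x ∈ gtsp n | dot (theta a + qI n I) x = gamma a + dot (qI n I) (zvec n)}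

end

end TSP

section ConvexHull

variable {𝕜 E : Type*} [Field 𝕜] [LinearOrder 𝕜] [IsStrictOrderedRing 𝕜]
  [AddCommGroup E] [Module 𝕜 E]

theorem mem_convexHull_inter_of_forall_le {s : Set E} {f : E →ₗ[𝕜] 𝕜} {α : 𝕜}
    (hs : ∀ y ∈ s, α ≤ f y) {x : E} (hx : x ∈ convexHull 𝕜 s) (hfx : f x = α) :
    x ∈ convexHull 𝕜 (s ∩ {y | f y = α}) := by
  set K := {y | α ≤ f y ∧ (f y = α → y ∈ convexHull 𝕜 (s ∩ {y | f y = α}))}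
  suffices hK : Convex 𝕜 K from (convexHull_min (t := K)
    (fun y hy => ⟨hs y hy, fun h => subset_convexHull 𝕜 _ ⟨hy, h⟩⟩) hK hx).2 hfx
  rintro y ⟨hyα, hy⟩ z ⟨hzα, hz⟩ a b ha hb hab
  have hsplit : f (a • y + b • z) - α = a * (f y - α) + b * (f z - α) := by
    simp only [map_add, map_smul, smul_eq_mul]; linear_combination α * hab
  have hay := mul_nonneg ha (sub_nonneg.2 hyα)
  have hbz := mul_nonneg hb (sub_nonneg.2 hzα)
  refine ⟨by linarith, fun heq => ?_⟩
  rcases ha.eq_or_lt with rfl | ha'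
  · rw [zero_add] at hab; subst hab
    simp only [zero_smul, one_smul, zero_add] at heq ⊢; exact hz heq
  rcases hb.eq_or_lt with rfl | hb'
  · rw [add_zero] at hab; subst hab
    simp only [zero_smul, one_smul, add_zero] at heq ⊢; exact hy heq
  -- both endpoints carry positive weight, so both lie on the hyperplane
  have hfy : f y - α = 0 :=
    (mul_eq_zero.1 (by linarith : a * (f y - α) = 0)).resolve_left ha'.ne'
  have hfz : f z - α = 0 :=
    (mul_eq_zero.1 (by linarith : b * (f z - α) = 0)).resolve_left hb'.ne'
  exact convex_convexHull 𝕜 _ (hy (by linarith)) (hz (by linarith)) ha hb hab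

theorem exists_pos_of_mem_convexHull {t : Set E} (g : E →ₗ[𝕜] 𝕜) {x : E}
    (hx : x ∈ convexHull 𝕜 t) (hgx : 0 < g x) : ∃ y ∈ t, 0 < g y := by
  by_contra! h
  exact absurd hgx (not_lt.2 (convexHull_min h (convex_halfSpace_le g.isLinear 0) hx))

end ConvexHull

theorem SimpleGraph.Connected.of_adj_reachable {V : Type*} {G H : SimpleGraph V}
    (hG : G.Connected) (h : ∀ p q, G.Adj p q → H.Reachable p q) : H.Connected := by
  refine (SimpleGraph.connected_iff H).2 ⟨fun p q => ?_, hG.nonempty⟩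
  obtain ⟨wk⟩ := hG p q
  induction wk with
  | nil => rfl
  | cons hadj _ ih => exact (h _ _ hadj).trans ih

namespace TSP

variable {n : ℕ}

def mkEdge (u v : Fin n) (h : u ≠ v) : Edge n :=
  ⟨s(u, v), fun hd => h (Sym2.mk_isDiag_iff.mp hd)⟩

theorem ev_of_ne (x : Edge n → ℝ) {u v : Fin n} (h : u ≠ v) : ev x u v = x (mkEdge u v h) :=
  dif_neg h

theorem ev_sub (x y : Edge n → ℝ) (u v : Fin n) : ev (x - y) u v = ev x u v - ev y u v := by
  unfold ev; split_ifs <;> simp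

theorem ev_indic {v w : Fin n} (hvw : v ≠ w) (p q : Fin n) :
    ev (indic v w) p q = if s(p, q) = s(v, w) then 1 else 0 := by
  rcases eq_or_ne p q with rfl | hpq
  · have : s(p, p) ≠ s(v, w) := fun h => hvw (Sym2.mk_isDiag_iff.1 (h ▸ rfl))
    simp [ev, this]
  · simp [ev, hpq, indic]

theorem dot_indic (a : Edge n → ℝ) {v w : Fin n} (h : v ≠ w) :
    dot a (indic v w) = ev a v w := by
  rw [ev_of_ne a h, dot, Finset.sum_eq_single (mkEdge v w h)]
  · simp [indic, mkEdge]
  · intro e _ he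
    simp [indic, show e.val ≠ s(v, w) from fun h' => he (Subtype.ext h')]
  · simp

theorem dot_sub (a x y : Edge n → ℝ) : dot a (x - y) = dot a x - dot a y :=
  dotProduct_sub a x y

theorem degree_sub (x y : Edge n → ℝ) (t : Fin n) :
    degree (x - y) t = degree x t - degree y t := by
  simp only [degree, ← Finset.sum_sub_distrib]
  exact Finset.sum_congr rfl fun e _ => by split_ifs <;> simp

theorem degree_indic {v w : Fin n} (h : v ≠ w) (t : Fin n) :
    degree (indic v w) t = if t ∈ s(v, w) then 1 else 0 := by
  rw [degree, Finset.sum_eq_single (mkEdge v w h)]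
  · simp [indic, mkEdge]
  · intro e _ he
    simp [indic, show e.val ≠ s(v, w) from fun h' => he (Subtype.ext h')]
  · simp

theorem shortcut_eq (u v w : Fin n) : shortcut u v w = indic v w - indic v u - indic u w := rfl

theorem dot_shortcut (a : Edge n → ℝ) {u v w : Fin n} (h : RootedTri u v w) :
    dot a (shortcut u v w) = -tri a u v w := by
  obtain ⟨hvw, huv, huw⟩ := h
  rw [shortcut_eq, dot_sub, dot_sub, dot_indic a hvw, dot_indic a huv.symm, dot_indic a huw, tri]
  ring

theorem degree_shortcut {u v w : Fin n} (h : RootedTri u v w) (t : Fin n) :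
    degree (shortcut u v w) t = if t = u then -2 else 0 := by
  obtain ⟨hvw, huv, huw⟩ := h
  rw [shortcut_eq, degree_sub, degree_sub, degree_indic hvw, degree_indic huv.symm,
    degree_indic huw]
  by_cases htu : t = u
  · subst htu; norm_num [huv, huw]
  by_cases htv : t = v
  · subst htv; simp [htu, hvw]
  by_cases htw : t = w
  · subst htw; simp [htu, htv]
  simp [htu, htv, htw]

theorem ev_shortcut {u v w : Fin n} (h : RootedTri u v w) (p q : Fin n) :
    ev (shortcut u v w) p q = (if s(p, q) = s(v, w) then 1 else 0)
      - (if s(p, q) = s(v, u) then 1 else 0) - (if s(p, q) = s(u, w) then 1 else 0) := by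
  obtain ⟨hvw, huv, huw⟩ := h
  rw [shortcut_eq, ev_sub, ev_sub, ev_indic hvw, ev_indic huv.symm, ev_indic huw]

theorem ev_sub_shortcut {u v w : Fin n} (h : RootedTri u v w) (y : Edge n → ℝ) {p q : Fin n}
    (hpq : s(p, q) ≠ s(v, w)) :
    ev (y - shortcut u v w) p q = ev y p q + (if s(p, q) = s(v, u) then 1 else 0)
      + (if s(p, q) = s(u, w) then 1 else 0) := by
  rw [ev_sub, ev_shortcut h, if_neg hpq]; ring

theorem IsEulerian.nonneg {y : Edge n → ℝ} (hy : IsEulerian y) (e : Edge n) : 0 ≤ y e := by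
  obtain ⟨m, hm⟩ := hy.1 e
  exact hm ▸ m.cast_nonneg

theorem IsEulerian.ev_nonneg {y : Edge n → ℝ} (hy : IsEulerian y) (p q : Fin n) :
    0 ≤ ev y p q := by
  unfold ev; split_ifs
  exacts [le_rfl, hy.nonneg _]

section Shortcut

variable {u v w : Fin n} {y : Edge n → ℝ}

theorem IsEulerian.sub_shortcut_nat (hy : IsEulerian y) (h : RootedTri u v w)
    (hpos : 0 < y (mkEdge v w h.1)) (e : Edge n) :
    ∃ m : ℕ, (y - shortcut u v w) e = m := by
  obtain ⟨m, hm⟩ := hy.1 e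
  have hint : ∃ k : ℤ, (y - shortcut u v w) e = k :=
    ⟨m - ((if e.val = s(v, w) then 1 else 0) - (if e.val = s(v, u) then 1 else 0)
      - (if e.val = s(u, w) then 1 else 0)), by
      simp only [Pi.sub_apply, shortcut, indic, hm]; push_cast; rfl⟩
  have hnonneg : 0 ≤ (y - shortcut u v w) e := by
    have hle : shortcut u v w e ≤ indic v w e := by
      simp only [shortcut, indic]; split_ifs <;> norm_num
    by_cases he : e.val = s(v, w)
    · -- `y` uses the edge `vw`, so it has at least one copy of it to remove
      obtain rfl : e = mkEdge v w h.1 := Subtype.ext he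
      have : (1 : ℝ) ≤ y (mkEdge v w h.1) := by
        rw [hm] at hpos ⊢; exact Nat.one_le_cast.2 (Nat.cast_pos.1 hpos)
      simp only [indic, if_pos he] at hle
      simp only [Pi.sub_apply]; linarith
    · simp only [indic, if_neg he] at hle
      simp only [Pi.sub_apply]; linarith [hy.nonneg e]
  obtain ⟨k, hk⟩ := hint
  lift k to ℕ using (by exact_mod_cast hk ▸ hnonneg)
  exact ⟨k, by exact_mod_cast hk⟩

theorem IsEulerian.sub_shortcut_connected (hy : IsEulerian y) (h : RootedTri u v w) :
    (supportGraph (y - shortcut u v w)).Connected := by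
  obtain ⟨-, huv, huw⟩ := id h
  have hvu : s(v, u) ≠ s(v, w) := fun h' => huw (Sym2.congr_right.1 h')
  have huw' : s(u, w) ≠ s(v, w) := fun h' => huv (Sym2.congr_left.1 h')
  have hadj_vu : (supportGraph (y - shortcut u v w)).Adj v u := by
    refine ⟨huv.symm, ?_⟩
    rw [ev_sub_shortcut h y hvu, if_pos rfl]
    have := hy.ev_nonneg v u
    split_ifs <;> linarith
  have hadj_uw : (supportGraph (y - shortcut u v w)).Adj u w := by
    refine ⟨huw, ?_⟩
    rw [ev_sub_shortcut h y huw', if_pos rfl]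
    have := hy.ev_nonneg u w
    split_ifs <;> linarith
  refine hy.2.1.of_adj_reachable fun p q ⟨hpq, hev⟩ => ?_
  by_cases hc : s(p, q) = s(v, w)
  · rcases Sym2.eq_iff.mp hc with ⟨rfl, rfl⟩ | ⟨rfl, rfl⟩
    · exact hadj_vu.reachable.trans hadj_uw.reachable
    · exact hadj_uw.symm.reachable.trans hadj_vu.symm.reachable
  · refine SimpleGraph.Adj.reachable ⟨hpq, ?_⟩
    rw [ev_sub_shortcut h y hc]
    split_ifs <;> linarith

theorem IsEulerian.sub_shortcut_degree (hy : IsEulerian y) (h : RootedTri u v w) (t : Fin n) :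
    ∃ m : ℕ, 0 < m ∧ degree (y - shortcut u v w) t = 2 * m := by
  obtain ⟨m, hm, hdeg⟩ := hy.2.2 t
  rw [degree_sub, degree_shortcut h, hdeg]
  split_ifs
  · exact ⟨m + 1, m.succ_pos, by push_cast; ring⟩
  · exact ⟨m, hm, by ring⟩

theorem IsEulerian.sub_shortcut (hy : IsEulerian y) (h : RootedTri u v w)
    (hpos : 0 < y (mkEdge v w h.1)) :
    IsEulerian (y - shortcut u v w) :=
  ⟨hy.sub_shortcut_nat h hpos, hy.sub_shortcut_connected h, hy.sub_shortcut_degree h⟩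

end Shortcut

theorem stmt1_general (n : ℕ) (a : Edge n → ℝ) (α : ℝ)
    (hvalid : ∀ x ∈ gtsp n, α ≤ dot a x)
    (hgood : IsGood {x ∈ gtsp n | dot a x = α}) :
    IsMetric a := by
  intro u v w h
  obtain ⟨x, ⟨hxP, hxa⟩, hxe⟩ := hgood (mkEdge v w h.1)
  have hx : x ∈ convexHull ℝ ({y | IsEulerian y} ∩ {y | dotProductBilin ℝ ℝ a y = α}) :=
    mem_convexHull_inter_of_forall_le (fun y hy => hvalid y (subset_convexHull ℝ _ hy)) hxP hxa
  obtain ⟨y, ⟨hyE, hya⟩, hye⟩ := exists_pos_of_mem_convexHull (LinearMap.proj _) hx hxe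
  have := hvalid _ (subset_convexHull ℝ _ (hyE.sub_shortcut h hye))
  rw [dot_sub, dot_shortcut a h] at this
  linarith [show dot a y = α from hya]

/-- an inequality defining a nonempty good face of `P` is metric. -/
theorem stmt1 (n : ℕ) (hn : 5 ≤ n) (a : Edge n → ℝ) (α : ℝ)
    (hvalid : ∀ x ∈ gtsp n, α ≤ dot a x)
    (hne : ({x ∈ gtsp n | dot a x = α}).Nonempty)
    (hgood : IsGood {x ∈ gtsp n | dot a x = α}) :
    IsMetric a :=
  stmt1_general n a α hvalid hgood

end TSP
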